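/- For propositional formulas φ over variables X ∩ Y = ∅ and ψ over Y, and a fresh variable z: φ is satisfiable and ψ is unsatisfiable if and only if {z} is a minimal model of ∃X∃Y (φ ∧ (z ∨ ψ)). -/

import Mathlib

/-! ### Machine model: deterministic single-tape Turing machines,
with explicit time and space usage. -/

structure STM (σ : Type) where
  Q : Type
  qFin : Fintype Q
  init : Q
  /-- Transition function: `none` means halt; otherwise
  (new state, written symbol (`none` = blank), move-right?). -/
  δ : Q → Option σ → Option (Q × Option σ × Bool)

namespace STM

variable {σ : Type}

structure Cfg (M : STM σ) where
  q : M.Q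
  head : ℕ
  tape : ℕ → Option σ

def initCfg (M : STM σ) (x : List σ) : M.Cfg :=
  ⟨M.init, 0, fun i => x[i]?⟩

def step (M : STM σ) (c : M.Cfg) : Option M.Cfg :=
  (M.δ c.q (c.tape c.head)).map fun t =>
    ⟨t.1, if t.2.2 then c.head + 1 else c.head - 1,
      fun i => if i = c.head then t.2.1 else c.tape i⟩

def step1 (M : STM σ) (c : M.Cfg) : M.Cfg := (M.step c).getD c

def run (M : STM σ) (n : ℕ) (c : M.Cfg) : M.Cfg := M.step1^[n] c

def Halted (M : STM σ) (c : M.Cfg) : Prop := M.step c = none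

/-- The tape holds exactly the string `l`, followed by blanks. -/
def Represents (t : ℕ → Option σ) (l : List σ) : Prop := ∀ i, t i = l[i]?

/-- `M` computes `f` within time bound `T` (with respect to injections of the
input and output alphabets into the tape alphabet). -/
def ComputesInTime {α β : Type} (M : STM σ) (ια : α → σ) (ιβ : β → σ)
    (f : List α → List β) (T : ℕ → ℕ) : Prop :=
  ∀ x : List α, ∃ n, n ≤ T x.length ∧
    M.Halted (M.run n (M.initCfg (x.map ια))) ∧
    Represents (M.run n (M.initCfg (x.map ια))).tape ((f x).map ιβ)

/-- `M` computes `f` within space bound `S`: the computation halts with the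
correct output and the head never leaves the first `S |x|` cells. -/
def ComputesInSpace {α β : Type} (M : STM σ) (ια : α → σ) (ιβ : β → σ)
    (f : List α → List β) (S : ℕ → ℕ) : Prop :=
  ∀ x : List α, ∃ n,
    M.Halted (M.run n (M.initCfg (x.map ια))) ∧
    Represents (M.run n (M.initCfg (x.map ια))).tape ((f x).map ιβ) ∧
    ∀ m, m ≤ n → (M.run m (M.initCfg (x.map ια))).head ≤ S x.length

end STM

/-- `f` is computable in polynomial time (by a deterministic Turing machine with
some finite tape alphabet). -/
def PolyTimeFun {α β : Type} (f : List α → List β) : Prop :=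
  ∃ (σ : Type) (_ : Fintype σ) (ια : α → σ) (ιβ : β → σ) (M : STM σ) (p : Polynomial ℕ),
    Function.Injective ια ∧ Function.Injective ιβ ∧
    M.ComputesInTime ια ιβ f (fun n => p.eval n)

/-- `f` is computable in polynomial space. -/
def PolySpaceFun {α β : Type} (f : List α → List β) : Prop :=
  ∃ (σ : Type) (_ : Fintype σ) (ια : α → σ) (ιβ : β → σ) (M : STM σ) (p : Polynomial ℕ),
    Function.Injective ια ∧ Function.Injective ιβ ∧
    M.ComputesInSpace ια ιβ f (fun n => p.eval n)

/-- Standard encoding of a pair of strings over a combined alphabet. -/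
def encodePair {α β : Type} (x : List α) (y : List β) : List (α ⊕ β) :=
  x.map Sum.inl ++ y.map Sum.inr

/-- A two-argument function is polynomial-time computable if the corresponding
function on encoded pairs is. -/
def PolyTimeFun₂ {α β γ : Type} (g : List α → List β → List γ) : Prop :=
  ∃ g' : List (α ⊕ β) → List γ, PolyTimeFun g' ∧ ∀ x y, g' (encodePair x y) = g x y

/-- A language is polynomial-time decidable. -/
def PolyTimeDecidable {α : Type} (L : Set (List α)) : Prop :=
  ∃ f : List α → List Bool, PolyTimeFun f ∧ ∀ x, x ∈ L ↔ f x = [true]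

/-- `L` is in NP: membership has polynomial-size certificates verifiable in
polynomial time. -/
def InNP {α : Type} (L : Set (List α)) : Prop :=
  ∃ (p : Polynomial ℕ) (V : Set (List (α ⊕ Bool))), PolyTimeDecidable V ∧
    ∀ x, x ∈ L ↔ ∃ w : List Bool, w.length ≤ p.eval x.length ∧ encodePair x w ∈ V

def InCoNP {α : Type} (L : Set (List α)) : Prop := InNP Lᶜ

/-- Polynomial-time many-one reducibility of languages. -/
def ManyOneRed {α β : Type} (L₁ : Set (List α)) (L₂ : Set (List β)) : Prop :=
  ∃ f : List α → List β, PolyTimeFun f ∧ ∀ x, x ∈ L₁ ↔ f x ∈ L₂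

def NPComplete {α : Type} (L : Set (List α)) : Prop :=
  InNP L ∧ ∀ (β : Type) (L' : Set (List β)), InNP L' → ManyOneRed L' L

def CoNPComplete {α : Type} (L : Set (List α)) : Prop :=
  InCoNP L ∧ ∀ (β : Type) (L' : Set (List β)), InCoNP L' → ManyOneRed L' L

def NPneqCoNP : Prop := ¬ ∀ (α : Type) (L : Set (List α)), InNP L ↔ InCoNP L

/-- `L` is in coNP/poly: a coNP predicate together with polynomial-size advice
depending only on the input length decides `L`. -/
def InCoNPpoly {α : Type} (L : Set (List α)) : Prop :=
  ∃ (p : Polynomial ℕ) (adv : ℕ → List Bool) (V : Set (List (α ⊕ Bool))),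
    InCoNP V ∧ (∀ n, (adv n).length ≤ p.eval n) ∧
    ∀ x, x ∈ L ↔ encodePair x (adv x.length) ∈ V

def NPnotSubCoNPpoly : Prop := ¬ ∀ (α : Type) (L : Set (List α)), InNP L → InCoNPpoly L

/-! ### Logic systems and model-equivalent reductions -/

/-- A logic system `(Γ, Δ, T, S, R)` (Definition 1): theories are strings over
`Γ`, interpretations are strings over `Δ`, and `R` is the satisfaction
relation. -/
structure LogicSystem (Γ Δ : Type) where
  T : Set (List Γ)
  S : Set (List Δ)
  R : List Γ → List Δ → Prop

namespace LogicSystem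

variable {Γ Δ : Type}

/-- The set of `R`-models of a theory `t`. -/
def Mod (L : LogicSystem Γ Δ) (t : List Γ) : Set (List Δ) := {w | w ∈ L.S ∧ L.R t w}

/-- A poly-size system: `R t w` implies `|w| = p (|t|)` for a fixed polynomial. -/
def PolySize (L : LogicSystem Γ Δ) : Prop :=
  ∃ p : Polynomial ℕ, ∀ t w, L.R t w → w.length = p.eval t.length

/-- The satisfaction relation `R`, as a language of encoded pairs. -/
def RelLang (L : LogicSystem Γ Δ) : Set (List (Γ ⊕ Δ)) :=
  {l | ∃ t w, l = encodePair t w ∧ L.R t w}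

/-- The model-checking problem: given a theory `t ∈ T` and an interpretation
`w ∈ S`, does `w` satisfy `t`? -/
def ModelCheckLang (L : LogicSystem Γ Δ) : Set (List (Γ ⊕ Δ)) :=
  {l | ∃ t w, l = encodePair t w ∧ t ∈ L.T ∧ w ∈ L.S ∧ L.R t w}

/-- The model-existence problem: `{t ∈ T : Mod_R(t) ≠ ∅}`. -/
def ModelExistLang (L : LogicSystem Γ Δ) : Set (List Γ) :=
  {t | t ∈ L.T ∧ (L.Mod t).Nonempty}

end LogicSystem

/-- Poly-time model-equivalent reduction (Definition 2): a poly-time translation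
`f` of theories, and a poly-time map `g` such that `g t` is a bijection from the
models of `t` onto the models of `f t`. -/
def PtimeModelEquivRed {Γ₁ Δ₁ Γ₂ Δ₂ : Type}
    (L₁ : LogicSystem Γ₁ Δ₁) (L₂ : LogicSystem Γ₂ Δ₂) : Prop :=
  ∃ (f : List Γ₁ → List Γ₂) (g : List Γ₁ → List Δ₁ → List Δ₂),
    PolyTimeFun f ∧ PolyTimeFun₂ g ∧
    ∀ t ∈ L₁.T, f t ∈ L₂.T ∧ Set.BijOn (g t) (L₁.Mod t) (L₂.Mod (f t))

/-- Poly-space model-equivalent reduction: as above, but `f` need only be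
computable in polynomial space. -/
def PspaceModelEquivRed {Γ₁ Δ₁ Γ₂ Δ₂ : Type}
    (L₁ : LogicSystem Γ₁ Δ₁) (L₂ : LogicSystem Γ₂ Δ₂) : Prop :=
  ∃ (f : List Γ₁ → List Γ₂) (g : List Γ₁ → List Δ₁ → List Δ₂),
    PolySpaceFun f ∧ PolyTimeFun₂ g ∧
    ∀ t ∈ L₁.T, f t ∈ L₂.T ∧ Set.BijOn (g t) (L₁.Mod t) (L₂.Mod (f t))

/-! ### Propositional formulas and existentially quantified propositional formulas -/

inductive PropForm where
  | tru : PropForm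
  | fls : PropForm
  | var (n : ℕ) : PropForm
  | neg (φ : PropForm) : PropForm
  | and (φ ψ : PropForm) : PropForm
  | or (φ ψ : PropForm) : PropForm
  deriving DecidableEq

namespace PropForm

def eval (v : ℕ → Bool) : PropForm → Bool
  | tru => true
  | fls => false
  | var n => v n
  | neg φ => !(eval v φ)
  | and φ ψ => eval v φ && eval v ψ
  | or φ ψ => eval v φ || eval v ψ

def vars : PropForm → Finset ℕ
  | tru => ∅
  | fls => ∅
  | var n => {n}
  | neg φ => vars φ
  | and φ ψ => vars φ ∪ vars ψ
  | or φ ψ => vars φ ∪ vars ψ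

def iff (φ ψ : PropForm) : PropForm := or (and φ ψ) (and (neg φ) (neg ψ))

def conj : List PropForm → PropForm
  | [] => tru
  | φ :: l => and φ (conj l)

def disj : List PropForm → PropForm
  | [] => fls
  | φ :: l => or φ (disj l)

/-- A formula is satisfiable if some assignment makes it true. -/
def Satisfiable (φ : PropForm) : Prop := ∃ v : ℕ → Bool, φ.eval v = true

/-- A model of `φ`, viewed as the set of variables assigned `true`. -/
def IsModel (φ : PropForm) (M : Finset ℕ) : Prop :=
  M ⊆ φ.vars ∧ φ.eval (fun i => decide (i ∈ M)) = true

/-- A minimal model: no proper subset is a model. -/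
def IsMinModel (φ : PropForm) (M : Finset ℕ) : Prop :=
  φ.IsModel M ∧ ∀ M', M' ⊂ M → ¬ φ.IsModel M'

end PropForm

/-- An existentially quantified propositional formula `∃ bound, matrix`
(free variables allowed). -/
structure EPF where
  bound : Finset ℕ
  matrix : PropForm

namespace EPF

def free (Φ : EPF) : Finset ℕ := Φ.matrix.vars \ Φ.bound

/-- Satisfaction of `Φ` by an assignment of its free variables. -/
def Sat (Φ : EPF) (v : ℕ → Bool) : Prop :=
  ∃ u : ℕ → Bool, (∀ i ∈ Φ.free, u i = v i) ∧ Φ.matrix.eval u = true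

/-- A model of `Φ`: a subset of the free variables whose characteristic
assignment satisfies `Φ`. -/
def IsModel (Φ : EPF) (M : Finset ℕ) : Prop :=
  M ⊆ Φ.free ∧ Φ.Sat (fun i => decide (i ∈ M))

def IsMinModel (Φ : EPF) (M : Finset ℕ) : Prop :=
  Φ.IsModel M ∧ ∀ M', M' ⊂ M → ¬ Φ.IsModel M'

end EPF

/-! ### String encodings of formulas, assignments, and the concrete systems -/

inductive PFAlpha where
  | x | bar | lnot | land | lor | exq | lp | rp | top | bot
  deriving DecidableEq

instance : Fintype PFAlpha :=
  ⟨{.x, .bar, .lnot, .land, .lor, .exq, .lp, .rp, .top, .bot}, by intro a; cases a <;> simp⟩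

def encodeVar (n : ℕ) : List PFAlpha := PFAlpha.x :: List.replicate (n + 1) PFAlpha.bar

def PropForm.encode : PropForm → List PFAlpha
  | .tru => [.top]
  | .fls => [.bot]
  | .var n => encodeVar n
  | .neg φ => .lnot :: φ.encode
  | .and φ ψ => .lp :: (φ.encode ++ .land :: (ψ.encode ++ [.rp]))
  | .or φ ψ => .lp :: (φ.encode ++ .lor :: (ψ.encode ++ [.rp]))

def EPF.encode (Φ : EPF) : List PFAlpha :=
  ((Φ.bound.sort (· ≤ ·)).map fun i => PFAlpha.exq :: encodeVar i).flatten ++ Φ.matrix.encode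

/-- Decode a `{0,1}`-string as a subset of a (sorted) finite set of variables. -/
def decodeM (F : Finset ℕ) (w : List Bool) : Finset ℕ :=
  ((((F.sort (· ≤ ·)).zip w).filter fun p => p.2).map fun p => p.1).toFinset

def SatRel (t : List PFAlpha) (w : List Bool) : Prop :=
  ∃ φ : PropForm, t = φ.encode ∧ w.length = φ.vars.card ∧ φ.IsModel (decodeM φ.vars w)

def MinSatRel (t : List PFAlpha) (w : List Bool) : Prop :=
  ∃ φ : PropForm, t = φ.encode ∧ w.length = φ.vars.card ∧ φ.IsMinModel (decodeM φ.vars w)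

def FSatRel (t : List PFAlpha) (w : List Bool) : Prop :=
  ∃ Φ : EPF, t = Φ.encode ∧ w.length = Φ.free.card ∧ Φ.IsModel (decodeM Φ.free w)

def FMinSatRel (t : List PFAlpha) (w : List Bool) : Prop :=
  ∃ Φ : EPF, t = Φ.encode ∧ w.length = Φ.free.card ∧ Φ.IsMinModel (decodeM Φ.free w)

/-- The system (PF, TA, Sat). -/
def SysSat : LogicSystem PFAlpha Bool :=
  ⟨{t | ∃ φ : PropForm, t = φ.encode}, Set.univ, SatRel⟩

/-- The system (PF, TA, MinSat). -/
def SysMinSat : LogicSystem PFAlpha Bool :=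
  ⟨{t | ∃ φ : PropForm, t = φ.encode}, Set.univ, MinSatRel⟩

/-- The system (∃PF, TA, FSat). -/
def SysFSat : LogicSystem PFAlpha Bool :=
  ⟨{t | ∃ Φ : EPF, t = Φ.encode}, Set.univ, FSatRel⟩

/-- The system (∃PF, TA, FMinSat). -/
def SysFMinSat : LogicSystem PFAlpha Bool :=
  ⟨{t | ∃ Φ : EPF, t = Φ.encode}, Set.univ, FMinSatRel⟩

/-! The only free variable is `z`, so `{z}` is a minimal model iff `{z}` is a model and `∅` is
not. With `z` true the matrix reduces to `φ`, with `z` false to `φ ∧ ψ`, and by disjointness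
`φ ∧ ψ` is satisfiable iff both conjuncts are. -/

namespace PropForm

theorem eval_congr (φ : PropForm) {u v : ℕ → Bool} (h : ∀ i ∈ φ.vars, u i = v i) :
    φ.eval u = φ.eval v := by
  induction φ with
  | tru | fls => rfl
  | var n => exact h n (Finset.mem_singleton_self n)
  | neg φ ih => simp only [eval, ih h]
  | and φ ψ ihφ ihψ | or φ ψ ihφ ihψ =>
    simp only [vars, Finset.mem_union] at h
    simp only [eval, ihφ fun i hi => h i (.inl hi), ihψ fun i hi => h i (.inr hi)]

theorem satisfiable_iff_exists_eval_of_notMem {φ : PropForm} {z : ℕ} (hz : z ∉ φ.vars)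
    (b : Bool) : φ.Satisfiable ↔ ∃ u : ℕ → Bool, u z = b ∧ φ.eval u = true := by
  refine ⟨fun ⟨v, hv⟩ => ⟨Function.update v z b, by simp, ?_⟩, fun ⟨u, _, hu⟩ => ⟨u, hu⟩⟩
  rwa [φ.eval_congr fun i hi => Function.update_of_ne (ne_of_mem_of_not_mem hi hz) _ _]

theorem satisfiable_and_iff_of_disjoint {φ ψ : PropForm} (h : Disjoint φ.vars ψ.vars) :
    (φ.and ψ).Satisfiable ↔ φ.Satisfiable ∧ ψ.Satisfiable := by
  refine ⟨fun ⟨u, hu⟩ => ?_, fun ⟨⟨v, hv⟩, ⟨w, hw⟩⟩ => ?_⟩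
  · simp only [eval, Bool.and_eq_true] at hu
    exact ⟨⟨u, hu.1⟩, ⟨u, hu.2⟩⟩
  · refine ⟨fun i => if i ∈ φ.vars then v i else w i, ?_⟩
    have hφ : φ.eval (fun i => if i ∈ φ.vars then v i else w i) = φ.eval v :=
      φ.eval_congr fun i hi => if_pos hi
    have hψ : ψ.eval (fun i => if i ∈ φ.vars then v i else w i) = ψ.eval w :=
      ψ.eval_congr fun i hi => if_neg (Finset.disjoint_right.mp h hi)
    simp only [eval, hφ, hψ, hv, hw, Bool.and_self]

theorem satisfiable_iff_exists_eval_and_var_or_of_true {φ : PropForm} {z : ℕ}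
    (hz : z ∉ φ.vars) (ψ : PropForm) :
    φ.Satisfiable ↔ ∃ u : ℕ → Bool, u z = true ∧ (φ.and ((var z).or ψ)).eval u = true := by
  rw [satisfiable_iff_exists_eval_of_notMem hz true]
  refine exists_congr fun u => and_congr_right fun hu => ?_
  simp [eval, hu]

theorem satisfiable_and_iff_exists_eval_and_var_or_of_false {φ ψ : PropForm} {z : ℕ}
    (hz : z ∉ φ.vars ∪ ψ.vars) :
    (φ.and ψ).Satisfiable ↔ ∃ u : ℕ → Bool, u z = false ∧ (φ.and ((var z).or ψ)).eval u = true := by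
  rw [satisfiable_iff_exists_eval_of_notMem (φ := φ.and ψ) hz false]
  refine exists_congr fun u => and_congr_right fun hu => ?_
  simp [eval, hu]

end PropForm

namespace EPF

theorem isMinModel_singleton_iff (Φ : EPF) (z : ℕ) :
    Φ.IsMinModel {z} ↔ Φ.IsModel {z} ∧ ¬ Φ.IsModel ∅ := by
  simp only [IsMinModel, Finset.ssubset_singleton_iff, forall_eq]

theorem isModel_iff_of_free_eq_singleton {Φ : EPF} {z : ℕ} (hfree : Φ.free = {z})
    {M : Finset ℕ} (hM : M ⊆ {z}) :
    Φ.IsModel M ↔ ∃ u : ℕ → Bool, u z = decide (z ∈ M) ∧ Φ.matrix.eval u = true := by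
  simp only [IsModel, Sat, hfree, Finset.mem_singleton, forall_eq, hM, true_and]

theorem free_mk_vars_union_and_var_or {φ ψ : PropForm} {z : ℕ} (hz : z ∉ φ.vars ∪ ψ.vars) :
    (EPF.mk (φ.vars ∪ ψ.vars) (φ.and ((PropForm.var z).or ψ))).free = {z} := by
  ext i
  simp only [free, PropForm.vars, Finset.mem_sdiff, Finset.mem_union, Finset.mem_singleton]
  constructor
  · rintro ⟨h | rfl | h, hi⟩ <;> tauto
  · rintro rfl
    simpa using hz

end EPF

/-- For `φ` over `X`, `ψ` over `Y` with `X ∩ Y = ∅` and a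
fresh variable `z`: `φ` is satisfiable and `ψ` is unsatisfiable iff `{z}` is a
minimal model of `∃X∃Y (φ ∧ (z ∨ ψ))`. -/
theorem sat_unsat_iff_min_model
    (φ ψ : PropForm) (z : ℕ)
    (hdisj : Disjoint φ.vars ψ.vars) (hz : z ∉ φ.vars ∪ ψ.vars) :
    (φ.Satisfiable ∧ ¬ ψ.Satisfiable) ↔
      (EPF.mk (φ.vars ∪ ψ.vars) (φ.and ((PropForm.var z).or ψ))).IsMinModel {z} := by
  have hfree := EPF.free_mk_vars_union_and_var_or hz
  rw [EPF.isMinModel_singleton_iff, EPF.isModel_iff_of_free_eq_singleton hfree subset_rfl,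
    EPF.isModel_iff_of_free_eq_singleton hfree (Finset.empty_subset _)]
  simp only [Finset.mem_singleton, decide_true, Finset.notMem_empty, decide_false]
  rw [← PropForm.satisfiable_iff_exists_eval_and_var_or_of_true
      (fun h => hz (Finset.mem_union_left _ h)),
    ← PropForm.satisfiable_and_iff_exists_eval_and_var_or_of_false hz,
    PropForm.satisfiable_and_iff_of_disjoint hdisj]
  tauto
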